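/- arXiv:math/0110173 — 3 statements merged into one kernel-verified Lean document; each statement's English description precedes it below -/
import Mathlib

section
/- Siegel's lemma, full version: for every complex symmetric n×n matrix Z with positive definite imaginary part, every principal minor Δ_j(Z) (the determinant of the upper-left j×j block) is nonzero, for 1 ≤ j ≤ n. -/
/-!
Leading principal blocks of `Z` are again symmetric with positive definite imaginary part, so it
suffices to show `det Z ≠ 0`. Write `Z = X + iY` with `X, Y` real symmetric. If `Z v = 0`, then
`0 = v* Z v = v* X v + i v* Y v` with both quadratic forms real, so `v* Y v = 0`, forcing `v = 0`
since `Y` stays positive definite on `ℂⁿ`.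
-/

open Matrix
open scoped ComplexOrder

namespace Matrix

variable {n : Type*}

lemma re_star_dotProduct_map_ofReal_mulVec [Fintype n] (Y : Matrix n n ℝ) (v : n → ℂ) :
    (star v ⬝ᵥ Y.map Complex.ofReal *ᵥ v).re =
      (fun i ↦ (v i).re) ⬝ᵥ Y *ᵥ (fun i ↦ (v i).re) +
        (fun i ↦ (v i).im) ⬝ᵥ Y *ᵥ (fun i ↦ (v i).im) := by
  simp only [dotProduct, mulVec, Finset.mul_sum, Complex.re_sum, ← Finset.sum_add_distrib]
  refine Finset.sum_congr rfl fun i _ ↦ Finset.sum_congr rfl fun j _ ↦ ?_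
  simp [Complex.mul_re, Complex.mul_im]

lemma IsHermitian.map_ofReal {Y : Matrix n n ℝ} (hY : Y.IsHermitian) :
    (Y.map Complex.ofReal).IsHermitian :=
  hY.map _ fun _ ↦ (Complex.conj_ofReal _).symm

lemma PosDef.map_ofReal [Fintype n] {Y : Matrix n n ℝ} (hY : Y.PosDef) :
    (Y.map Complex.ofReal).PosDef := by
  refine .of_dotProduct_mulVec_pos hY.isHermitian.map_ofReal fun v hv ↦ ?_
  refine Complex.lt_def.mpr ⟨?_, (hY.isHermitian.map_ofReal.im_star_dotProduct_mulVec_self v).symm⟩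
  rw [re_star_dotProduct_map_ofReal_mulVec, Complex.zero_re]
  have hnonneg (x : n → ℝ) : 0 ≤ x ⬝ᵥ Y *ᵥ x := by
    simpa using hY.posSemidef.dotProduct_mulVec_nonneg x
  have hpos {x : n → ℝ} (hx : x ≠ 0) : 0 < x ⬝ᵥ Y *ᵥ x := by
    simpa using hY.dotProduct_mulVec_pos hx
  by_cases hre : (fun i ↦ (v i).re) = 0
  · have him : (fun i ↦ (v i).im) ≠ 0 := fun him ↦
      hv (funext fun i ↦ Complex.ext (congrFun hre i) (congrFun him i))
    exact add_pos_of_nonneg_of_pos (hnonneg _) (hpos him)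
  · exact add_pos_of_pos_of_nonneg (hpos hre) (hnonneg _)

lemma map_re_add_I_smul_map_im (Z : Matrix n n ℂ) :
    (Z.map Complex.re).map Complex.ofReal + Complex.I • (Z.map Complex.im).map Complex.ofReal = Z := by
  ext i j
  simp [mul_comm Complex.I, Complex.re_add_im]

lemma det_ne_zero_of_isSymm_of_posDef_map_im [Fintype n] [DecidableEq n] {Z : Matrix n n ℂ}
    (hZ : Z.IsSymm) (hpos : (Z.map Complex.im).PosDef) : Z.det ≠ 0 := by
  intro hdet
  obtain ⟨v, hv, hZv⟩ := exists_mulVec_eq_zero_iff.mpr hdet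
  have hX : ((Z.map Complex.re).map Complex.ofReal).IsHermitian :=
    (isHermitian_iff_isSymm.mpr (hZ.map _)).map_ofReal
  have hq : star v ⬝ᵥ Z *ᵥ v = 0 := by rw [hZv, dotProduct_zero]
  rw [← map_re_add_I_smul_map_im Z, add_mulVec, smul_mulVec, dotProduct_add, dotProduct_smul] at hq
  have him := congrArg Complex.im hq
  simp only [smul_eq_mul, Complex.add_im, Complex.mul_im, Complex.I_re, Complex.I_im, zero_mul,
    one_mul, zero_add, Complex.zero_im] at him
  have hXreal := hX.im_star_dotProduct_mulVec_self v
  have hYpos := hpos.map_ofReal.re_dotProduct_pos hv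
  simp only [RCLike.im_to_complex, RCLike.re_to_complex] at hXreal hYpos
  linarith

end Matrix

theorem siegel_lemma_minors_general (n : ℕ) (Z : Matrix (Fin n) (Fin n) ℂ)
    (hsym : Zᵀ = Z) (hpos : (Z.map Complex.im).PosDef)
    (j : ℕ) (hjn : j ≤ n) :
    (Z.submatrix (Fin.castLE hjn) (Fin.castLE hjn)).det ≠ 0 := by
  refine det_ne_zero_of_isSymm_of_posDef_map_im (IsSymm.submatrix hsym _) ?_
  rw [← submatrix_map]
  exact hpos.submatrix (Fin.castLE_injective hjn)

theorem siegel_lemma_minors (n : ℕ) (Z : Matrix (Fin n) (Fin n) ℂ)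
    (hsym : Zᵀ = Z) (hpos : (Z.map Complex.im).PosDef)
    (j : ℕ) (hj1 : 1 ≤ j) (hjn : j ≤ n) :
    (Z.submatrix (Fin.castLE hjn) (Fin.castLE hjn)).det ≠ 0 :=
  siegel_lemma_minors_general n Z hsym hpos j hjn
end

section
/- Strong Siegel's lemma: for a complex symmetric n×n matrix Z with positive definite imaginary part, the quotient χ_j(Z) = Δ_j(Z)/Δ_{j−1}(Z) of consecutive principal minors has strictly positive imaginary part, for each 1 ≤ j ≤ n (with Δ_0 := 1). -/
open Matrix

/-! For `v ≠ 0` with real and imaginary parts `a`, `b`, symmetry of `W` gives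
`v* W v = aᵀ W a + bᵀ W b`, hence `Im (v* W v) = aᵀ (Im W) a + bᵀ (Im W) b > 0`. So every leading
block `W` of `Z` is invertible, and `v = W⁻¹ eⱼ` gives `Im (W⁻¹)ⱼⱼ = -Im (v* W v) < 0`. By Cramer's
rule `(W⁻¹)ⱼⱼ = Δⱼ₋₁ / Δⱼ`, so its inverse `Δⱼ / Δⱼ₋₁` lies in the upper half-plane. -/

/-- The `j`-th principal minor of `Z`: determinant of the upper-left `j × j` block.
For `j = 0` this is `1`. -/
def principalMinor (n : ℕ) (Z : Matrix (Fin n) (Fin n) ℂ) (j : ℕ) (h : j ≤ n) : ℂ :=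
  (Z.submatrix (Fin.castLE h) (Fin.castLE h)).det

namespace Matrix

variable {ι : Type*} [Fintype ι]

theorem star_dotProduct_mulVec_of_transpose_eq {W : Matrix ι ι ℂ} (hW : Wᵀ = W) (v : ι → ℂ) :
    star v ⬝ᵥ W *ᵥ v =
      (fun i ↦ ((v i).re : ℂ)) ⬝ᵥ W *ᵥ (fun i ↦ ((v i).re : ℂ)) +
        (fun i ↦ ((v i).im : ℂ)) ⬝ᵥ W *ᵥ (fun i ↦ ((v i).im : ℂ)) := by
  set a : ι → ℂ := fun i ↦ ((v i).re : ℂ)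
  set b : ι → ℂ := fun i ↦ ((v i).im : ℂ)
  have hv : v = a + Complex.I • b := funext fun i ↦ Complex.ext (by simp [a, b]) (by simp [a, b])
  have hstar : star v = a - Complex.I • b :=
    funext fun i ↦ Complex.ext (by simp [a, b]) (by simp [a, b])
  have hcross : b ⬝ᵥ W *ᵥ a = a ⬝ᵥ W *ᵥ b := by
    rw [dotProduct_mulVec, ← mulVec_transpose, hW, dotProduct_comm]
  rw [hstar, hv]
  simp only [mulVec_add, mulVec_smul, dotProduct_add, sub_dotProduct, dotProduct_smul,
    smul_dotProduct, smul_eq_mul, hcross]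
  linear_combination -(b ⬝ᵥ W *ᵥ b) * Complex.I_mul_I

theorem im_ofReal_dotProduct_mulVec (W : Matrix ι ι ℂ) (x : ι → ℝ) :
    ((fun i ↦ (x i : ℂ)) ⬝ᵥ W *ᵥ (fun i ↦ (x i : ℂ))).im = x ⬝ᵥ W.map Complex.im *ᵥ x := by
  simp [dotProduct, mulVec, Complex.im_sum, Finset.mul_sum]

theorem im_star_dotProduct_mulVec_pos {W : Matrix ι ι ℂ} (hW : Wᵀ = W)
    (hpos : (W.map Complex.im).PosDef) {v : ι → ℂ} (hv : v ≠ 0) :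
    0 < (star v ⬝ᵥ W *ᵥ v).im := by
  rw [star_dotProduct_mulVec_of_transpose_eq hW, Complex.add_im, im_ofReal_dotProduct_mulVec,
    im_ofReal_dotProduct_mulVec]
  have hre := hpos.posSemidef.dotProduct_mulVec_nonneg fun i ↦ (v i).re
  have him := hpos.posSemidef.dotProduct_mulVec_nonneg fun i ↦ (v i).im
  simp only [star_trivial] at hre him
  by_cases hre0 : (fun i ↦ (v i).re) = 0
  · have him0 : (fun i ↦ (v i).im) ≠ 0 := fun him0 ↦
      hv <| funext fun i ↦ Complex.ext (congrFun hre0 i) (congrFun him0 i)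
    simpa using add_pos_of_nonneg_of_pos hre (hpos.dotProduct_mulVec_pos him0)
  · simpa using add_pos_of_pos_of_nonneg (hpos.dotProduct_mulVec_pos hre0) him

theorem det_ne_zero_of_im_posDef [DecidableEq ι] {W : Matrix ι ι ℂ} (hW : Wᵀ = W)
    (hpos : (W.map Complex.im).PosDef) : W.det ≠ 0 := by
  intro h
  obtain ⟨v, hv, hWv⟩ := exists_mulVec_eq_zero_iff.mpr h
  have := im_star_dotProduct_mulVec_pos hW hpos hv
  rw [hWv, dotProduct_zero, Complex.zero_im] at this
  exact this.false

theorem im_inv_apply_self_neg [DecidableEq ι] {W : Matrix ι ι ℂ} (hW : Wᵀ = W)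
    (hpos : (W.map Complex.im).PosDef) (i : ι) : (W⁻¹ i i).im < 0 := by
  have hunit : IsUnit W.det := (det_ne_zero_of_im_posDef hW hpos).isUnit
  set v := W⁻¹ *ᵥ Pi.single i 1
  have hWv : W *ᵥ v = Pi.single i 1 := by
    rw [mulVec_mulVec, mul_nonsing_inv _ hunit, one_mulVec]
  have hv : v ≠ 0 := fun h ↦ by simpa [h] using congrFun hWv i
  have := im_star_dotProduct_mulVec_pos hW hpos hv
  rw [hWv, dotProduct_single, mul_one, Pi.star_apply] at this
  simpa [v, mulVec_single] using this

theorem inv_apply_last_last {K : Type*} [Field K] {m : ℕ}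
    (W : Matrix (Fin (m + 1)) (Fin (m + 1)) K) :
    W⁻¹ (Fin.last m) (Fin.last m) = (W.submatrix Fin.castSucc Fin.castSucc).det / W.det := by
  rw [inv_def, Ring.inverse_eq_inv', smul_apply, smul_eq_mul, adjugate_fin_succ_eq_det_submatrix,
    Fin.succAbove_last, ← two_mul, pow_mul, neg_one_sq, one_pow, one_mul, div_eq_inv_mul]

end Matrix

theorem Complex.im_inv_pos_of_im_neg {z : ℂ} (hz : z.im < 0) : 0 < z⁻¹.im := by
  have hz0 : z ≠ 0 := fun h ↦ by simp [h] at hz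
  rw [Complex.inv_im]
  exact div_pos (neg_pos.mpr hz) (Complex.normSq_pos.mpr hz0)

theorem strong_siegel_lemma (n : ℕ) (Z : Matrix (Fin n) (Fin n) ℂ)
    (hsym : Zᵀ = Z) (hpos : (Z.map Complex.im).PosDef)
    (j : ℕ) (hj1 : 1 ≤ j) (hjn : j ≤ n) :
    0 < (principalMinor n Z j hjn /
      principalMinor n Z (j - 1) ((Nat.sub_le j 1).trans hjn)).im := by
  obtain ⟨m, rfl⟩ : ∃ m, j = m + 1 := ⟨j - 1, (Nat.succ_pred_eq_of_pos hj1).symm⟩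
  set W := Z.submatrix (Fin.castLE hjn) (Fin.castLE hjn)
  have hW : Wᵀ = W := by rw [transpose_submatrix, hsym]
  have hWpos : (W.map Complex.im).PosDef := hpos.submatrix (Fin.castLE_injective hjn)
  have hquot : principalMinor n Z (m + 1) hjn /
      principalMinor n Z (m + 1 - 1) ((Nat.sub_le (m + 1) 1).trans hjn) =
        (W⁻¹ (Fin.last m) (Fin.last m))⁻¹ := by
    rw [inv_apply_last_last, inv_div, submatrix_submatrix]
    rfl
  rw [hquot]
  exact Complex.im_inv_pos_of_im_neg (im_inv_apply_self_neg hW hWpos _)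
end

section
/- Kostant convexity for SL(2,ℝ): for X = diag(x, −x) with x ∈ ℝ, the set of Iwasawa A-components a(k·exp X) for k ∈ SO(2) equals {diag(e^t, e^{−t}) : |t| ≤ |x|}. Equivalently, with k the rotation by φ: the A-part parameter is t(φ) = ½·log(cos²φ · e^{2x} + sin²φ · e^{−2x}), and {t(φ) : φ ∈ ℝ} = [−|x|, |x|]. -/
/-- Kostant convexity for SL(2,ℝ): the Iwasawa `A`-part parameter of
`k_φ · diag(e^x, e^{-x})` is `t(φ) = ½ log(cos²φ·e^{2x} + sin²φ·e^{−2x})`, and its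
range over `φ ∈ ℝ` is exactly `[−|x|, |x|]`. -/
theorem kostant_convexity_sl2 (x : ℝ) :
    Set.range (fun φ : ℝ =>
      (1 / 2) * Real.log ((Real.cos φ) ^ 2 * Real.exp (2 * x) +
        (Real.sin φ) ^ 2 * Real.exp (-(2 * x)))) = Set.Icc (-|x|) |x| := by
  set f : ℝ → ℝ := fun φ : ℝ =>
      (1 / 2) * Real.log ((Real.cos φ) ^ 2 * Real.exp (2 * x) +
        (Real.sin φ) ^ 2 * Real.exp (-(2 * x))) with hf
  have hpos : ∀ φ : ℝ, 0 < (Real.cos φ) ^ 2 * Real.exp (2 * x) +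
      (Real.sin φ) ^ 2 * Real.exp (-(2 * x)) := by
    intro φ
    have h1 := Real.sin_sq_add_cos_sq φ
    have h2 := Real.exp_pos (2 * x)
    have h3 := Real.exp_pos (-(2 * x))
    have hc : 0 ≤ (Real.cos φ) ^ 2 := sq_nonneg _
    have hs : 0 ≤ (Real.sin φ) ^ 2 := sq_nonneg _
    rcases eq_or_ne (Real.cos φ) 0 with h | h
    · have hs1 : (Real.sin φ) ^ 2 = 1 := by rw [h] at h1; simpa using h1
      rw [h, hs1]; simpa using h3
    · have hc2 : 0 < (Real.cos φ) ^ 2 := by positivity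
      nlinarith
  apply Set.eq_of_subset_of_subset
  · rintro t ⟨φ, rfl⟩
    have h1 := Real.sin_sq_add_cos_sq φ
    have hc : 0 ≤ (Real.cos φ) ^ 2 := sq_nonneg _
    have hs : 0 ≤ (Real.sin φ) ^ 2 := sq_nonneg _
    have hE : Real.exp (2 * x) ≤ Real.exp (2 * |x|) :=
      Real.exp_le_exp.2 (by have := le_abs_self x; linarith)
    have hE' : Real.exp (-(2 * x)) ≤ Real.exp (2 * |x|) :=
      Real.exp_le_exp.2 (by have := neg_abs_le x; linarith)
    have hL : Real.exp (-(2 * |x|)) ≤ Real.exp (2 * x) :=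
      Real.exp_le_exp.2 (by have := neg_abs_le x; linarith)
    have hL' : Real.exp (-(2 * |x|)) ≤ Real.exp (-(2 * x)) :=
      Real.exp_le_exp.2 (by have := le_abs_self x; linarith)
    have hub : (Real.cos φ) ^ 2 * Real.exp (2 * x) +
        (Real.sin φ) ^ 2 * Real.exp (-(2 * x)) ≤ Real.exp (2 * |x|) := by
      have a1 := mul_le_mul_of_nonneg_left hE hc
      have a2 := mul_le_mul_of_nonneg_left hE' hs
      have key : (Real.cos φ) ^ 2 * Real.exp (2 * |x|) +
          (Real.sin φ) ^ 2 * Real.exp (2 * |x|) = Real.exp (2 * |x|) := by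
        rw [← add_mul, add_comm, h1, one_mul]
      linarith
    have hlb : Real.exp (-(2 * |x|)) ≤ (Real.cos φ) ^ 2 * Real.exp (2 * x) +
        (Real.sin φ) ^ 2 * Real.exp (-(2 * x)) := by
      have a1 := mul_le_mul_of_nonneg_left hL hc
      have a2 := mul_le_mul_of_nonneg_left hL' hs
      have key : (Real.cos φ) ^ 2 * Real.exp (-(2 * |x|)) +
          (Real.sin φ) ^ 2 * Real.exp (-(2 * |x|)) = Real.exp (-(2 * |x|)) := by
        rw [← add_mul, add_comm, h1, one_mul]
      linarith
    constructor
    · have h := Real.log_le_log (Real.exp_pos (-(2 * |x|))) hlb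
      rw [Real.log_exp] at h
      simp only [f]
      linarith
    · have h := Real.log_le_log (hpos φ) hub
      rw [Real.log_exp] at h
      simp only [f]
      linarith
  · intro t ht
    obtain ⟨ht1, ht2⟩ := ht
    have hcont : Continuous f := by
      apply Continuous.mul continuous_const
      apply Continuous.log
      · fun_prop
      · intro φ; exact (hpos φ).ne'
    have hf0 : f 0 = x := by
      simp [f, Real.log_exp]
    have hfpi : f (Real.pi / 2) = -x := by
      simp [f, Real.cos_pi_div_two, Real.sin_pi_div_two, Real.log_exp]
    have hmem : t ∈ Set.uIcc (f 0) (f (Real.pi / 2)) := by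
      rw [hf0, hfpi, Set.mem_uIcc]
      rcases abs_cases x with ⟨h1, h2⟩ | ⟨h1, h2⟩
      · right; rw [h1] at ht1 ht2; exact ⟨by linarith, ht2⟩
      · left; rw [h1] at ht1 ht2; exact ⟨by linarith, ht2⟩
    obtain ⟨φ, _, hφ⟩ := intermediate_value_uIcc (hcont.continuousOn) hmem
    exact ⟨φ, hφ⟩
end
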